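/- If f₁ and f₂ are differentiable functions satisfying f₁'(t) + P₁(t)·f₁(t) = 0 and f₂'(t) + P₂(t)·f₂(t) = 0 for scalar-valued (hence commuting) functions P₁, P₂, then F = a₁f₁ + a₂f₂ satisfies the second-order equation A(t)F''(t) + B(t)F'(t) + C(t)F(t) = 0, where A = P₂ − P₁, B = (P₂² − P₁²) − (P₂ − P₁)', and C = P₂P₁(P₂ − P₁) − (P₁P₂' − P₂P₁'). -/

import Mathlib

theorem stmt_0 (f₁ f₂ P₁ P₂ : ℝ → ℝ) (a₁ a₂ : ℝ)
    (hf₁ : Differentiable ℝ f₁) (hf₁' : Differentiable ℝ (deriv f₁))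
    (hf₂ : Differentiable ℝ f₂) (hf₂' : Differentiable ℝ (deriv f₂))
    (hP₁ : Differentiable ℝ P₁) (hP₂ : Differentiable ℝ P₂)
    (heq₁ : ∀ t, deriv f₁ t + P₁ t * f₁ t = 0)
    (heq₂ : ∀ t, deriv f₂ t + P₂ t * f₂ t = 0) :
    ∀ t : ℝ,
      (P₂ t - P₁ t) * deriv (deriv (fun s => a₁ * f₁ s + a₂ * f₂ s)) t
      + ((P₂ t ^ 2 - P₁ t ^ 2) - deriv (fun s => P₂ s - P₁ s) t) *
          deriv (fun s => a₁ * f₁ s + a₂ * f₂ s) t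
      + (P₂ t * P₁ t * (P₂ t - P₁ t) - (P₁ t * deriv P₂ t - P₂ t * deriv P₁ t)) *
          (a₁ * f₁ t + a₂ * f₂ t) = 0 := by
  intro t
  have e₁ : deriv f₁ = fun s => -(P₁ s * f₁ s) := by
    funext s; linarith [heq₁ s]
  have e₂ : deriv f₂ = fun s => -(P₂ s * f₂ s) := by
    funext s; linarith [heq₂ s]
  have hF : deriv (fun s => a₁ * f₁ s + a₂ * f₂ s) =
      fun s => a₁ * deriv f₁ s + a₂ * deriv f₂ s := by
    funext s
    rw [deriv_fun_add ((hf₁ s).const_mul a₁) ((hf₂ s).const_mul a₂),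
      deriv_const_mul a₁ (hf₁ s), deriv_const_mul a₂ (hf₂ s)]
  have hdd₁ : deriv (deriv f₁) t = -(deriv P₁ t * f₁ t + P₁ t * deriv f₁ t) := by
    conv_lhs => rw [e₁]
    rw [deriv.fun_neg, deriv_fun_mul (hP₁ t) (hf₁ t)]
  have hdd₂ : deriv (deriv f₂) t = -(deriv P₂ t * f₂ t + P₂ t * deriv f₂ t) := by
    conv_lhs => rw [e₂]
    rw [deriv.fun_neg, deriv_fun_mul (hP₂ t) (hf₂ t)]
  have hFF : deriv (deriv (fun s => a₁ * f₁ s + a₂ * f₂ s)) t =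
      a₁ * deriv (deriv f₁) t + a₂ * deriv (deriv f₂) t := by
    rw [hF]
    rw [deriv_fun_add ((hf₁' t).const_mul a₁) ((hf₂' t).const_mul a₂),
      deriv_const_mul a₁ (hf₁' t), deriv_const_mul a₂ (hf₂' t)]
  have hPd : deriv (fun s => P₂ s - P₁ s) t = deriv P₂ t - deriv P₁ t :=
    deriv_sub (hP₂ t) (hP₁ t)
  have d1 : deriv f₁ t = -(P₁ t * f₁ t) := by rw [e₁]
  have d2 : deriv f₂ t = -(P₂ t * f₂ t) := by rw [e₂]
  rw [hFF, hF, hPd, hdd₁, hdd₂]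
  beta_reduce
  rw [d1, d2]
  ring
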